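/- Let 𝔊 = (G, Parity(ℙ), ψ_colive(Ec)) be a parity game augmented with co-live edges, let G' = (V, E ∖ Ec) (assumed to be a game graph), let W1' be the winning region of Player 1 in the (non-augmented) parity game (G', Parity(ℙ)), and let A be the Player-1 attractor of W1' in G, i.e. the set of vertices from which Player 1 has a strategy forcing every compliant play in G to visit W1'. Then every vertex of A is winning for Player 1 in the augmented game 𝔊. -/
import Mathlib


universe u

/-- A two-player game graph: finite-intended vertex set `V`, an ownership function
(`owner v = 0` means `v` is a Player-0 vertex, `owner v = 1` a Player-1 vertex),
and an edge relation such that every vertex has at least one outgoing edge. -/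
structure GameGraph (V : Type u) where
  owner : V → Fin 2
  E : V → V → Prop
  exists_succ : ∀ v, ∃ w, E v w

variable {V : Type u}

/-- A play of the game graph: an infinite sequence of vertices following edges. -/
def IsPlay (G : GameGraph V) (ρ : ℕ → V) : Prop :=
  ∀ k, G.E (ρ k) (ρ (k + 1))

/-- A (history-dependent) strategy: given the list of previously visited
vertices and the current vertex, it chooses a next vertex. -/
abbrev Strategy (V : Type u) := List V → V → V

/-- A strategy of Player `i` is valid if at each Player-`i` vertex it chooses
an edge of the game graph. -/
def StratValid (G : GameGraph V) (i : Fin 2) (σ : Strategy V) : Prop :=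
  ∀ (h : List V) (v : V), G.owner v = i → G.E v (σ h v)

/-- A positional (memoryless) strategy ignores the history. -/
def Positional (σ : Strategy V) : Prop :=
  ∀ (h h' : List V) (v : V), σ h v = σ h' v

/-- A play is compliant with the strategy `σ` of Player `i` (a `σ`-play) if at
every Player-`i` vertex it moves to the vertex chosen by `σ`. -/
def Compliant (G : GameGraph V) (i : Fin 2) (σ : Strategy V) (ρ : ℕ → V) : Prop :=
  ∀ k, G.owner (ρ k) = i → ρ (k + 1) = σ (List.ofFn fun j : Fin k => ρ j.val) (ρ k)

/-- `σ` is a winning strategy for Player `i` from `v`, where `W` is the set of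
plays that are winning for Player `i`. -/
def WinsFrom (G : GameGraph V) (i : Fin 2) (W : Set (ℕ → V)) (σ : Strategy V) (v : V) : Prop :=
  StratValid G i σ ∧
    ∀ ρ : ℕ → V, IsPlay G ρ → Compliant G i σ ρ → ρ 0 = v → ρ ∈ W

/-- The winning region of Player `i`: the vertices from which Player `i` has a
winning strategy. -/
def WinRegion (G : GameGraph V) (i : Fin 2) (W : Set (ℕ → V)) : Set V :=
  {v | ∃ σ, WinsFrom G i W σ v}

/-- A vertex occurs infinitely often along a play. -/
def InfOft (ρ : ℕ → V) (v : V) : Prop := ∀ n, ∃ k, n ≤ k ∧ ρ k = v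

/-- An edge is taken infinitely often along a play. -/
def EdgeInfOft (ρ : ℕ → V) (e : V × V) : Prop :=
  ∀ n, ∃ k, n ≤ k ∧ ρ k = e.1 ∧ ρ (k + 1) = e.2

/-- Parity objective: the maximal priority occurring infinitely often is even. -/
def ParityWin (P : V → ℕ) (ρ : ℕ → V) : Prop :=
  ∃ v, InfOft ρ v ∧ Even (P v) ∧ ∀ w, InfOft ρ w → P w ≤ P v

/-- The set of source vertices of a set of edges. -/
def srcSet (H : Set (V × V)) : Set V := {u | ∃ w, (u, w) ∈ H}

/-- Strong transition co-fairness assumption: every co-live edge is taken only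
finitely often. -/
def psiColive (Ec : Set (V × V)) (ρ : ℕ → V) : Prop :=
  ∀ e ∈ Ec, ¬ EdgeInfOft ρ e

/-- The Player-`i` attractor of `T`: the set of vertices from which Player `i`
has a strategy forcing every compliant play to visit `T`. -/
def Attr (G : GameGraph V) (i : Fin 2) (T : Set V) : Set V :=
  {v | ∃ σ : Strategy V, StratValid G i σ ∧
    ∀ ρ : ℕ → V, IsPlay G ρ → Compliant G i σ ρ → ρ 0 = v → ∃ k, ρ k ∈ T}

section CombStrat
open Classical

/-- Combined strategy: if some vertex of the history (or the current vertex)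
lies in `W1`, follow the strategy `S w` chosen for the first such vertex `w`,
with the history truncated to start at that first occurrence; otherwise follow
the attractor strategy `σA`. -/
noncomputable def combStrat (W1 : Set V) (S : V → Strategy V) (σA : Strategy V) : Strategy V :=
  fun h v =>
    if hex : ∃ k, k < (h ++ [v]).length ∧ (h ++ [v]).getD k v ∈ W1 then
      S ((h ++ [v]).getD (Nat.find hex) v) (h.drop (Nat.find hex)) v
    else σA h v

lemma combStrat_pos (W1 : Set V) (S : V → Strategy V) (σA : Strategy V)
    (h : List V) (v : V)
    (hex : ∃ k, k < (h ++ [v]).length ∧ (h ++ [v]).getD k v ∈ W1) :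
    combStrat W1 S σA h v
      = S ((h ++ [v]).getD (Nat.find hex) v) (h.drop (Nat.find hex)) v := by
  unfold combStrat
  rw [dif_pos hex]

lemma combStrat_neg (W1 : Set V) (S : V → Strategy V) (σA : Strategy V)
    (h : List V) (v : V)
    (hnex : ¬ ∃ k, k < (h ++ [v]).length ∧ (h ++ [v]).getD k v ∈ W1) :
    combStrat W1 S σA h v = σA h v := by
  unfold combStrat
  rw [dif_neg hnex]

end CombStrat

/-- Let `𝔊 = (G, Parity(ℙ), ψ_colive(Ec))`, let `G' = (V, E ∖ Ec)`
(assumed to be a game graph), let `W1'` be Player 1's winning region in the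
non-augmented parity game `(G', Parity(ℙ))`, and let `A` be the Player-1
attractor of `W1'` in `G`. Then every vertex of `A` is winning for Player 1 in
the augmented game `𝔊`. -/
theorem stmt1 (V : Type) [Fintype V] (G G' : GameGraph V)
    (d : ℕ) (P : V → ℕ) (hP : ∀ v, P v ≤ d)
    (Ec : Set (V × V)) (hEc : ∀ e ∈ Ec, G.E e.1 e.2 ∧ G.owner e.1 = 1)
    (howner : ∀ v, G'.owner v = G.owner v)
    (hE' : ∀ u w, G'.E u w ↔ (G.E u w ∧ (u, w) ∉ Ec)) :
    ∀ v ∈ Attr G 1 (WinRegion G' 1 {ρ | ¬ ParityWin P ρ}),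
      v ∈ WinRegion G 1 {ρ | psiColive Ec ρ ∧ ¬ ParityWin P ρ} := by
  classical
  intro v hv
  obtain ⟨σA, hAval, hAattr⟩ := hv
  set Wset : Set (ℕ → V) := {ρ | ¬ ParityWin P ρ} with hWsetdef
  set W1 : Set V := WinRegion G' 1 Wset with hW1def
  have hsel : ∀ w : V, ∃ σ : Strategy V, w ∈ W1 → WinsFrom G' 1 Wset σ w := by
    intro w
    by_cases h : w ∈ W1
    · obtain ⟨σ, hσ⟩ := h
      exact ⟨σ, fun _ => hσ⟩
    · exact ⟨σA, fun h' => absurd h' h⟩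
  choose S hS using hsel
  set τ : Strategy V := combStrat W1 S σA with hτdef
  -- validity of the combined strategy
  have hτval : StratValid G 1 τ := by
    intro h u hu
    by_cases hex : ∃ k, k < (h ++ [u]).length ∧ (h ++ [u]).getD k u ∈ W1
    · rw [hτdef, combStrat_pos W1 S σA h u hex]
      have hmem : (h ++ [u]).getD (Nat.find hex) u ∈ W1 := (Nat.find_spec hex).2
      have hEdge : G'.E u
          (S ((h ++ [u]).getD (Nat.find hex) u) (h.drop (Nat.find hex)) u) :=
        (hS _ hmem).1 _ u (by rw [howner]; exact hu)
      exact ((hE' _ _).1 hEdge).1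
    · rw [hτdef, combStrat_neg W1 S σA h u hex]
      exact hAval h u hu
  refine ⟨τ, hτval, ?_⟩
  intro ρ hplay hcomp hρ0
  -- history facts
  have hH : ∀ n : ℕ,
      (List.ofFn fun j : Fin n => ρ j.val) ++ [ρ n]
        = List.ofFn fun j : Fin (n + 1) => ρ j.val := by
    intro n
    rw [List.ofFn_succ' (fun j : Fin (n + 1) => ρ j.val), List.concat_eq_append]
    simp
  have hgetD : ∀ (n k : ℕ), k < n → ∀ x : V,
      (List.ofFn fun j : Fin n => ρ j.val).getD k x = ρ k := by
    intro n k hk x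
    rw [List.getD_eq_getElem _ _ (by simpa using hk), List.getElem_ofFn]
  -- the play reaches W1
  have hreach : ∃ k, ρ k ∈ W1 := by
    by_contra hno
    push_neg at hno
    have hcompA : Compliant G 1 σA ρ := by
      intro k hk
      have hck := hcomp k hk
      have hnex : ¬ ∃ m, m < ((List.ofFn fun j : Fin k => ρ j.val) ++ [ρ k]).length ∧
          ((List.ofFn fun j : Fin k => ρ j.val) ++ [ρ k]).getD m (ρ k) ∈ W1 := by
        rintro ⟨m, hm, hmem⟩
        rw [hH k] at hm hmem
        rw [List.length_ofFn] at hm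
        rw [hgetD (k + 1) m hm] at hmem
        exact hno m hmem
      rw [hck, hτdef, combStrat_neg W1 S σA _ _ hnex]
    obtain ⟨k, hk⟩ := hAattr ρ hplay hcompA hρ0
    exact hno k hk
  set k₀ : ℕ := Nat.find hreach with hk₀def
  have hk₀ : ρ k₀ ∈ W1 := Nat.find_spec hreach
  have hmin : ∀ j, j < k₀ → ρ j ∉ W1 := fun j hj => Nat.find_min hreach hj
  -- after reaching W1, the combined strategy follows S (ρ k₀)
  have hstep : ∀ j : ℕ, τ (List.ofFn fun i : Fin (k₀ + j) => ρ i.val) (ρ (k₀ + j))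
      = S (ρ k₀) (List.ofFn fun i : Fin j => ρ (k₀ + i.val)) (ρ (k₀ + j)) := by
    intro j
    set h : List V := List.ofFn fun i : Fin (k₀ + j) => ρ i.val with hhdef
    have hlen : (h ++ [ρ (k₀ + j)]).length = k₀ + j + 1 := by
      rw [hhdef, hH, List.length_ofFn]
    have hgd : ∀ m, m < k₀ + j + 1 →
        (h ++ [ρ (k₀ + j)]).getD m (ρ (k₀ + j)) = ρ m := by
      intro m hm
      rw [hhdef, hH]
      exact hgetD _ _ hm _
    have hex : ∃ k, k < (h ++ [ρ (k₀ + j)]).length ∧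
        (h ++ [ρ (k₀ + j)]).getD k (ρ (k₀ + j)) ∈ W1 :=
      ⟨k₀, by rw [hlen]; omega, by rw [hgd k₀ (by omega)]; exact hk₀⟩
    have hfind : Nat.find hex = k₀ := by
      apply le_antisymm
      · exact Nat.find_le ⟨by rw [hlen]; omega, by rw [hgd k₀ (by omega)]; exact hk₀⟩
      · by_contra hlt
        push_neg at hlt
        have hspec := Nat.find_spec hex
        have h2 := hspec.2
        rw [hgd _ (by omega)] at h2
        exact hmin _ hlt h2
    have hdrop : h.drop k₀ = List.ofFn fun i : Fin j => ρ (k₀ + i.val) := by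
      apply List.ext_getElem
      · rw [hhdef]
        simp [List.length_drop, List.length_ofFn]
      · intro m h1 h2
        rw [List.getElem_drop]
        simp [hhdef, List.getElem_ofFn]
    rw [hτdef, combStrat_pos W1 S σA h _ hex, hfind, hgd k₀ (by omega), hdrop]
  -- the tail play
  have hcomp' : Compliant G' 1 (S (ρ k₀)) (fun j => ρ (k₀ + j)) := by
    intro j hj
    have hown : G.owner (ρ (k₀ + j)) = 1 := by rw [← howner]; exact hj
    have h1 := hcomp (k₀ + j) hown
    rw [hstep j] at h1
    exact h1
  have hplay' : IsPlay G' (fun j => ρ (k₀ + j)) := by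
    intro j
    by_cases hown : G.owner (ρ (k₀ + j)) = 1
    · have h1 := hcomp (k₀ + j) hown
      rw [hstep j] at h1
      have h2 := (hS _ hk₀).1 (List.ofFn fun i : Fin j => ρ (k₀ + i.val)) (ρ (k₀ + j))
        (by rw [howner]; exact hown)
      show G'.E (ρ (k₀ + j)) (ρ (k₀ + (j + 1)))
      rw [show k₀ + (j + 1) = k₀ + j + 1 from rfl, h1]
      exact h2
    · show G'.E (ρ (k₀ + j)) (ρ (k₀ + (j + 1)))
      rw [hE']
      refine ⟨hplay (k₀ + j), ?_⟩
      intro hmem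
      exact hown (hEc _ hmem).2
  have hw : (fun j => ρ (k₀ + j)) ∈ Wset := (hS _ hk₀).2 _ hplay' hcomp' rfl
  -- transfer of infinitely-often between the play and its tail
  have hinf : ∀ x : V, InfOft ρ x ↔ InfOft (fun j => ρ (k₀ + j)) x := by
    intro x
    constructor
    · intro hI n
      obtain ⟨k, hk1, hk2⟩ := hI (k₀ + n)
      refine ⟨k - k₀, by omega, ?_⟩
      show ρ (k₀ + (k - k₀)) = x
      rw [show k₀ + (k - k₀) = k by omega]
      exact hk2
    · intro hI n
      obtain ⟨j, hj1, hj2⟩ := hI n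
      exact ⟨k₀ + j, by omega, hj2⟩
  have hnp' : ¬ ParityWin P (fun j => ρ (k₀ + j)) := hw
  have hnp : ¬ ParityWin P ρ := by
    rintro ⟨x, hx, he, hmax⟩
    exact hnp' ⟨x, (hinf x).1 hx, he, fun w hw' => hmax w ((hinf w).2 hw')⟩
  have hcl : psiColive Ec ρ := by
    intro e he hio
    obtain ⟨k, hk1, hk2, hk3⟩ := hio k₀
    have hedge := (hE' _ _).1 (hplay' (k - k₀))
    apply hedge.2
    have heq : (ρ (k₀ + (k - k₀)), ρ (k₀ + (k - k₀ + 1))) = e := by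
      rw [show k₀ + (k - k₀) = k by omega, show k₀ + (k - k₀ + 1) = k + 1 by omega,
        hk2, hk3]
    rw [heq]
    exact he
  exact ⟨hcl, hnp⟩
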